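/- arXiv:1008.3735 — 4 statements merged into one kernel-verified Lean document; each statement's English description precedes it below -/
import Mathlib

section
/- Let α0,α1,α2,α3,α4 be complex numbers with α0+α1+2α2+2α3+2α4=1. There is no solution (x,y,z,w) of the Sasano system B4(α0,α1,α2,α3,α4) on an annulus {|t|>R} such that all four functions x, y, z, w are holomorphic at t=∞ (i.e., each has a finite limit as t→∞). -/
open Filter Topology Polynomial

noncomputable section

/-- The four equations of the Sasano system of type `B₄⁽¹⁾` at the point `t`. -/
def B4Eqs (a0 a1 a2 a3 a4 : ℂ) (x y z w : ℂ → ℂ) (t : ℂ) : Prop :=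
  (t * deriv x t =
      2 * x t ^ 2 * y t - x t ^ 2 + (1 - 2*a2 - 2*a3 - 2*a4) * x t
        + 2 * a3 * z t + 2 * z t ^ 2 * w t + t) ∧
  (t * deriv y t =
      -2 * x t * y t ^ 2 + 2 * x t * y t - (1 - 2*a2 - 2*a3 - 2*a4) * y t + a1) ∧
  (t * deriv z t =
      2 * z t ^ 2 * w t - z t ^ 2 + (1 - 2*a4) * z t + 2 * y t * z t ^ 2 + t) ∧
  (t * deriv w t =
      -2 * z t * w t ^ 2 + 2 * z t * w t - (1 - 2*a4) * w t
        - 2 * a3 * y t - 4 * y t * z t * w t + a3)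

/-- `(x,y,z,w)` is a holomorphic solution of the Sasano system `B₄⁽¹⁾` on the set `s`. -/
def SolvesB4On (a0 a1 a2 a3 a4 : ℂ) (x y z w : ℂ → ℂ) (s : Set ℂ) : Prop :=
  ∀ t ∈ s, DifferentiableAt ℂ x t ∧ DifferentiableAt ℂ y t ∧
    DifferentiableAt ℂ z t ∧ DifferentiableAt ℂ w t ∧ B4Eqs a0 a1 a2 a3 a4 x y z w t

/-- The filter of neighbourhoods of `t = ∞` in `ℂ`. -/
def atInfty : Filter ℂ := Filter.comap (fun t : ℂ => ‖t‖) Filter.atTop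

/-- `f` is holomorphic at `t = ∞`: `f(t)` has a finite limit as `t → ∞`. -/
def HoloAtInfty (f : ℂ → ℂ) : Prop := ∃ L : ℂ, Tendsto f atInfty (𝓝 L)

/-- `f` has a pole of order `n ≥ 1` at `t = ∞`: `t⁻ⁿ·f(t)` has a finite nonzero limit
as `t → ∞`. -/
def PoleAtInftyOfOrder (f : ℂ → ℂ) (n : ℕ) : Prop :=
  ∃ L : ℂ, L ≠ 0 ∧ Tendsto (fun t => f t / t ^ n) atInfty (𝓝 L)

/-!
Only the first equation matters. Dividing it by `t` gives `x' = 1 + G(t)/t` with `G` a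
polynomial in `x, y, z, w`, so if all four components have finite limits at `∞` then
`x' → 1`. But a function whose derivative tends to a nonzero constant `c` grows linearly
along the real axis (in the direction `c`), so `x` cannot have a finite limit.
-/

open Bornology

lemma atInfty_eq_cobounded : atInfty = cobounded ℂ := comap_norm_atTop (E := ℂ)

theorem tendsto_atTop_of_hasDerivAt_ge {g g' : ℝ → ℝ} {δ : ℝ} (hδ : 0 < δ)
    (h : ∀ᶠ s in atTop, HasDerivAt g (g' s) s ∧ δ ≤ g' s) : Tendsto g atTop atTop := by
  obtain ⟨S, hS⟩ := eventually_atTop.mp h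
  have hmono : MonotoneOn (fun s => g s - δ * s) (Set.Ici S) := by
    have hderiv (s : ℝ) (hs : S ≤ s) : HasDerivAt (fun s => g s - δ * s) (g' s - δ) s := by
      simpa using (hS s hs).1.fun_sub ((hasDerivAt_id' s).const_mul δ)
    refine monotoneOn_of_hasDerivWithinAt_nonneg (f' := fun s => g' s - δ) (convex_Ici S)
      (fun s hs => (hderiv s hs).continuousAt.continuousWithinAt) (fun s hs => ?_)
      (fun s hs => ?_)
    · rw [interior_Ici] at hs
      exact (hderiv s (le_of_lt hs)).hasDerivWithinAt
    · rw [interior_Ici] at hs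
      exact sub_nonneg.mpr (hS s (le_of_lt hs)).2
  have hlinear : ∀ᶠ s in atTop, g S - δ * S + δ * s ≤ g s :=
    eventually_atTop.mpr ⟨S, fun s hs => by
      have := hmono Set.self_mem_Ici (Set.mem_Ici.mpr hs) hs
      linarith⟩
  refine tendsto_atTop_mono' atTop hlinear ?_
  exact tendsto_atTop_add_const_left _ _ (tendsto_id.const_mul_atTop hδ)

open ComplexConjugate in
theorem not_tendsto_nhds_of_tendsto_deriv {f : ℂ → ℂ} {c L : ℂ} (hc : c ≠ 0)
    (hf : ∀ᶠ t in cobounded ℂ, DifferentiableAt ℂ f t)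
    (hf' : Tendsto (deriv f) (cobounded ℂ) (𝓝 c)) : ¬ Tendsto f (cobounded ℂ) (𝓝 L) := by
  intro hL
  have hreal := RCLike.tendsto_ofReal_atTop_cobounded ℂ
  -- `Re (c̄ f(s))` has derivative `Re (c̄ f'(s)) → ‖c‖² > 0` along the real axis.
  have hlim : Tendsto (fun s : ℝ => (conj c * deriv f s).re) atTop (𝓝 (‖c‖ ^ 2)) := by
    have := (Complex.continuous_re.tendsto _).comp ((hf'.const_mul (conj c)).comp hreal)
    rwa [Complex.conj_mul', ← Complex.ofReal_pow, Complex.ofReal_re] at this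
  have hpos : 0 < ‖c‖ ^ 2 / 2 := by positivity
  have hlim_gt : ∀ᶠ s : ℝ in atTop, ‖c‖ ^ 2 / 2 < (conj c * deriv f s).re :=
    hlim.eventually (lt_mem_nhds (half_lt_self (by positivity)))
  have hgrowth : Tendsto (fun s : ℝ => (conj c * f s).re) atTop atTop := by
    refine tendsto_atTop_of_hasDerivAt_ge (g' := fun s : ℝ => (conj c * deriv f s).re) hpos ?_
    filter_upwards [hreal.eventually hf, hlim_gt] with s hdiff hge
    exact ⟨(hdiff.hasDerivAt.const_mul (conj c)).real_of_complex, hge.le⟩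
  exact not_tendsto_nhds_of_tendsto_atTop hgrowth _
    ((Complex.continuous_re.tendsto _).comp ((hL.const_mul (conj c)).comp hreal))

theorem SolvesB4On.tendsto_deriv_fst {a0 a1 a2 a3 a4 : ℂ} {R : ℝ} {x y z w : ℂ → ℂ}
    (hsol : SolvesB4On a0 a1 a2 a3 a4 x y z w {t : ℂ | R < ‖t‖}) {Lx Ly Lz Lw : ℂ}
    (hx : Tendsto x atInfty (𝓝 Lx)) (hy : Tendsto y atInfty (𝓝 Ly))
    (hz : Tendsto z atInfty (𝓝 Lz)) (hw : Tendsto w atInfty (𝓝 Lw)) :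
    Tendsto (deriv x) atInfty (𝓝 1) := by
  set G : ℂ → ℂ := fun t => 2 * x t ^ 2 * y t - x t ^ 2 + (1 - 2*a2 - 2*a3 - 2*a4) * x t
    + 2 * a3 * z t + 2 * z t ^ 2 * w t
  have hG : Tendsto G atInfty (𝓝 (2 * Lx ^ 2 * Ly - Lx ^ 2 + (1 - 2*a2 - 2*a3 - 2*a4) * Lx
      + 2 * a3 * Lz + 2 * Lz ^ 2 * Lw)) :=
    ((((((hx.pow 2).const_mul 2).mul hy).sub (hx.pow 2)).add (hx.const_mul _)).add
      (hz.const_mul _)).add (((hz.pow 2).const_mul 2).mul hw)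
  have hderiv : ∀ᶠ t in atInfty, G t * t⁻¹ + 1 = deriv x t := by
    rw [atInfty_eq_cobounded]
    filter_upwards [tendsto_norm_cobounded_atTop.eventually_gt_atTop (max R 0)] with t ht
    have ht0 : t ≠ 0 := norm_pos_iff.mp (lt_of_le_of_lt (le_max_right R 0) ht)
    have heq := (hsol t (lt_of_le_of_lt (le_max_left R 0) ht)).2.2.2.2.1
    field_simp
    linear_combination -heq
  have := (hG.mul (atInfty_eq_cobounded ▸ tendsto_inv₀_cobounded)).add_const 1
  rw [mul_zero, zero_add] at this
  exact this.congr' hderiv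

theorem B4_no_solution_all_holomorphic_at_infinity_general (a0 a1 a2 a3 a4 : ℂ)
    (R : ℝ) (x y z w : ℂ → ℂ)
    (hsol : SolvesB4On a0 a1 a2 a3 a4 x y z w {t : ℂ | R < ‖t‖}) :
    ¬ (HoloAtInfty x ∧ HoloAtInfty y ∧ HoloAtInfty z ∧ HoloAtInfty w) := by
  rintro ⟨⟨Lx, hx⟩, ⟨Ly, hy⟩, ⟨Lz, hz⟩, ⟨Lw, hw⟩⟩
  have hderiv := hsol.tendsto_deriv_fst hx hy hz hw
  have hdiff : ∀ᶠ t in cobounded ℂ, DifferentiableAt ℂ x t :=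
    (tendsto_norm_cobounded_atTop.eventually_gt_atTop R).mono fun t ht => (hsol t ht).1
  rw [atInfty_eq_cobounded] at hx hderiv
  exact not_tendsto_nhds_of_tendsto_deriv one_ne_zero hdiff hderiv hx

/-- There is no solution of the Sasano system `B₄⁽¹⁾` on an annulus `{|t| > R}` such that
all four components `x, y, z, w` are holomorphic at `t = ∞`. -/
theorem B4_no_solution_all_holomorphic_at_infinity (a0 a1 a2 a3 a4 : ℂ)
    (hsum : a0 + a1 + 2*a2 + 2*a3 + 2*a4 = 1) (R : ℝ) (x y z w : ℂ → ℂ)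
    (hsol : SolvesB4On a0 a1 a2 a3 a4 x y z w {t : ℂ | R < ‖t‖}) :
    ¬ (HoloAtInfty x ∧ HoloAtInfty y ∧ HoloAtInfty z ∧ HoloAtInfty w) :=
  B4_no_solution_all_holomorphic_at_infinity_general a0 a1 a2 a3 a4 R x y z w hsol
end
end

section
/- Let α0,α1,α2,α3,α4 be complex numbers with α0+α1+2α2+2α3+2α4=1, and let (x,y,z,w) be a solution of the Sasano system B4(α0,α1,α2,α3,α4) on a punctured neighborhood of t=0 such that x, y, z, w all extend holomorphically to t=0. Then x(0)=0 or x(0)=α0−α1. -/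
/-!
Near `t = 0` each of `x, y, z, w` extends holomorphically, so its derivative stays bounded and
`t * f' t → 0`. Letting `t → 0` in the four equations, the right-hand sides vanish at
`(x₀, y₀, z₀, w₀, 0)`. Using `α₀ + α₁ = 1 - 2α₂ - 2α₃ - 2α₄`, the first equation becomes
`x₀ (2x₀y₀ - x₀ + α₀ + α₁) + 2 z₀ (z₀w₀ + α₃) = 0`, while the last two force
`(1 - 2y₀) z₀ (z₀w₀ + α₃) = 0`. If `y₀ = 1/2` the second equation gives `x₀ = α₀ - α₁`;
otherwise `x₀ = 0`, or `2x₀y₀ - x₀ + α₀ + α₁ = 0`, which with the second equation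
(`x₀y₀ + α₁ = 0`) again gives `x₀ = α₀ - α₁`.
-/

open Filter Topology Polynomial

noncomputable section

theorem Function.update_eventuallyEq_nhds_of_ne {α β : Type*} [TopologicalSpace α] [T1Space α]
    [DecidableEq α] {f : α → β} {a t : α} {c : β} (ht : t ≠ a) :
    Function.update f a c =ᶠ[𝓝 t] f :=
  eventually_of_mem (isOpen_compl_singleton.mem_nhds ht) fun _ hs => Function.update_of_ne hs _ _

theorem tendsto_deriv_nhdsNE_of_tendsto {f : ℂ → ℂ} {a c : ℂ}
    (hd : ∀ᶠ t in 𝓝[≠] a, DifferentiableAt ℂ f t) (hc : Tendsto f (𝓝[≠] a) (𝓝 c)) :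
    Tendsto (deriv f) (𝓝[≠] a) (𝓝 (deriv (Function.update f a c) a)) := by
  set F := Function.update f a c
  have hFf : ∀ᶠ t in 𝓝[≠] a, F =ᶠ[𝓝 t] f := by
    filter_upwards [self_mem_nhdsWithin] with t ht
    exact Function.update_eventuallyEq_nhds_of_ne ht
  have hFd : ∀ᶠ t in 𝓝[≠] a, DifferentiableAt ℂ F t := by
    filter_upwards [hd, hFf] with t ht hFt
    exact ht.congr_of_eventuallyEq hFt
  have hF : AnalyticAt ℂ F a :=
    Complex.analyticAt_of_differentiable_on_punctured_nhds_of_continuousAt hFd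
      (continuousAt_update_same.mpr hc)
  refine (hF.deriv.continuousAt.tendsto.mono_left nhdsWithin_le_nhds).congr' ?_
  filter_upwards [hFf] with t hFt
  exact hFt.deriv_eq

theorem tendsto_mul_deriv_nhdsNE_zero {f : ℂ → ℂ} {c : ℂ}
    (hd : ∀ᶠ t in 𝓝[≠] 0, DifferentiableAt ℂ f t) (hc : Tendsto f (𝓝[≠] 0) (𝓝 c)) :
    Tendsto (fun t => t * deriv f t) (𝓝[≠] 0) (𝓝 0) := by
  simpa using (tendsto_id.mono_left nhdsWithin_le_nhds).mul (tendsto_deriv_nhdsNE_of_tendsto hd hc)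

def b4Field (a1 a2 a3 a4 t x y z w : ℂ) : ℂ × ℂ × ℂ × ℂ :=
  (2 * x ^ 2 * y - x ^ 2 + (1 - 2*a2 - 2*a3 - 2*a4) * x + 2 * a3 * z + 2 * z ^ 2 * w + t,
   -2 * x * y ^ 2 + 2 * x * y - (1 - 2*a2 - 2*a3 - 2*a4) * y + a1,
   2 * z ^ 2 * w - z ^ 2 + (1 - 2*a4) * z + 2 * y * z ^ 2 + t,
   -2 * z * w ^ 2 + 2 * z * w - (1 - 2*a4) * w - 2 * a3 * y - 4 * y * z * w + a3)

theorem continuous_b4Field (a1 a2 a3 a4 : ℂ) :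
    Continuous fun q : ℂ × ℂ × ℂ × ℂ × ℂ =>
      b4Field a1 a2 a3 a4 q.1 q.2.1 q.2.2.1 q.2.2.2.1 q.2.2.2.2 := by
  unfold b4Field
  fun_prop

theorem Filter.Tendsto.b4Field {α : Type*} {l : Filter α} {t x y z w : α → ℂ}
    {t0 x0 y0 z0 w0 : ℂ} (a1 a2 a3 a4 : ℂ) (ht : Tendsto t l (𝓝 t0)) (hx : Tendsto x l (𝓝 x0))
    (hy : Tendsto y l (𝓝 y0)) (hz : Tendsto z l (𝓝 z0)) (hw : Tendsto w l (𝓝 w0)) :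
    Tendsto (fun s => b4Field a1 a2 a3 a4 (t s) (x s) (y s) (z s) (w s)) l
      (𝓝 (b4Field a1 a2 a3 a4 t0 x0 y0 z0 w0)) := by
  -- Elaborating the composite before matching it against the goal avoids a costly unification.
  have h := ((continuous_b4Field a1 a2 a3 a4).tendsto (t0, x0, y0, z0, w0)).comp
    (ht.prodMk_nhds (hx.prodMk_nhds (hy.prodMk_nhds (hz.prodMk_nhds hw))))
  exact h

theorem B4Eqs.mul_deriv_eq_b4Field {a0 a1 a2 a3 a4 : ℂ} {x y z w : ℂ → ℂ} {t : ℂ}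
    (h : B4Eqs a0 a1 a2 a3 a4 x y z w t) :
    (t * deriv x t, t * deriv y t, t * deriv z t, t * deriv w t) =
      b4Field a1 a2 a3 a4 t (x t) (y t) (z t) (w t) := by
  obtain ⟨hx, hy, hz, hw⟩ := h
  rw [hx, hy, hz, hw, b4Field]

theorem eq_zero_or_eq_sub_of_b4Field_eq_zero {a0 a1 a2 a3 a4 x y z w : ℂ}
    (hsum : a0 + a1 + 2*a2 + 2*a3 + 2*a4 = 1) (h : b4Field a1 a2 a3 a4 0 x y z w = 0) :
    x = 0 ∨ x = a0 - a1 := by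
  simp only [b4Field, Prod.mk_eq_zero, add_zero] at h
  obtain ⟨E1, E2, E3, E4⟩ := h
  by_cases hy : y = 1 / 2
  · subst hy
    right
    linear_combination 2 * E2 - hsum
  have hzw : z * (z * w + a3) = 0 := by
    rcases eq_or_ne z 0 with hz | hz
    · simp [hz]
    have E3' : 2 * z * w - z + (1 - 2*a4) + 2 * y * z = 0 := by
      refine (mul_eq_zero.mp ?_).resolve_left hz
      linear_combination E3
    have key : (1 - 2 * y) * (z * w + a3) = 0 := by linear_combination E4 + w * E3'
    have hy' : 1 - 2 * y ≠ 0 := fun h => hy (by linear_combination -h / 2)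
    rw [(mul_eq_zero.mp key).resolve_left hy', mul_zero]
  have hx : x * (2 * x * y - x + (a0 + a1)) = 0 := by
    linear_combination E1 - 2 * hzw + x * hsum
  refine (mul_eq_zero.mp hx).imp id fun hx' => ?_
  have hxy : x * y + a1 = 0 := by linear_combination E2 + y * hx' - y * hsum
  linear_combination -hx' + 2 * hxy

/-- For a solution of the Sasano system `B₄⁽¹⁾` on a punctured neighbourhood of `t = 0`
whose components all extend holomorphically to `t = 0`, the value of `x` at `0`
is `0` or `α₀ - α₁`. -/
theorem B4_holomorphic_at_zero_value_of_x (a0 a1 a2 a3 a4 : ℂ)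
    (hsum : a0 + a1 + 2*a2 + 2*a3 + 2*a4 = 1) (ε : ℝ) (hε : 0 < ε)
    (x y z w : ℂ → ℂ)
    (hsol : SolvesB4On a0 a1 a2 a3 a4 x y z w {t : ℂ | t ≠ 0 ∧ ‖t‖ < ε})
    (x0 : ℂ) (hx : Tendsto x (𝓝[≠] 0) (𝓝 x0))
    (hy : ∃ y0 : ℂ, Tendsto y (𝓝[≠] 0) (𝓝 y0))
    (hz : ∃ z0 : ℂ, Tendsto z (𝓝[≠] 0) (𝓝 z0))
    (hw : ∃ w0 : ℂ, Tendsto w (𝓝[≠] 0) (𝓝 w0)) :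
    x0 = 0 ∨ x0 = a0 - a1 := by
  obtain ⟨y0, hy⟩ := hy
  obtain ⟨z0, hz⟩ := hz
  obtain ⟨w0, hw⟩ := hw
  have hball : {t : ℂ | t ≠ 0 ∧ ‖t‖ < ε} ∈ 𝓝[≠] 0 := by
    filter_upwards [self_mem_nhdsWithin, nhdsWithin_le_nhds (Metric.ball_mem_nhds 0 hε)]
      with t ht htε using ⟨ht, mem_ball_zero_iff.mp htε⟩
  have hsol' := eventually_of_mem hball hsol
  have hlhs : Tendsto (fun t => (t * deriv x t, t * deriv y t, t * deriv z t, t * deriv w t))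
      (𝓝[≠] 0) (𝓝 0) :=
    (tendsto_mul_deriv_nhdsNE_zero (hsol'.mono fun _ h => h.1) hx).prodMk_nhds <|
      (tendsto_mul_deriv_nhdsNE_zero (hsol'.mono fun _ h => h.2.1) hy).prodMk_nhds <|
      (tendsto_mul_deriv_nhdsNE_zero (hsol'.mono fun _ h => h.2.2.1) hz).prodMk_nhds
      (tendsto_mul_deriv_nhdsNE_zero (hsol'.mono fun _ h => h.2.2.2.1) hw)
  have hrhs : Tendsto (fun t => b4Field a1 a2 a3 a4 t (x t) (y t) (z t) (w t))
      (𝓝[≠] 0) (𝓝 (b4Field a1 a2 a3 a4 0 x0 y0 z0 w0)) :=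
    (tendsto_id.mono_left nhdsWithin_le_nhds).b4Field a1 a2 a3 a4 hx hy hz hw
  refine eq_zero_or_eq_sub_of_b4Field_eq_zero hsum (tendsto_nhds_unique hrhs (hlhs.congr' ?_))
  filter_upwards [hsol'] with t ht
  exact ht.2.2.2.2.mul_deriv_eq_b4Field
end
end

section
/- Let α0,α1,α2,α3,α4 be complex numbers with α0+α1+2α2+2α3+2α4=1, let c ∈ ℂ with c ≠ 0, and let (x,y,z,w) be a solution of the Sasano system B4(α0,α1,α2,α3,α4) on a punctured neighborhood of t=c such that x, y, z, w are all meromorphic at t=c. Then the Hamiltonian H_{B4}(t) evaluated along the solution has a pole of order at most one at t=c, and Res_{t=c} H_{B4} ∈ {0, c, 3c}. -/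
/-!
Along a solution `H' = y + w`: the system is Hamiltonian for `H` in the time `log t`, so only
the explicit `t`-dependence of `H` survives. Comparing lowest-order Laurent terms at `c` in the
four equations shows that `y + w` has at most a double pole, with `(t - c)⁻²`-coefficient `0`,
`-c` or `-3c`. The third equation forces `ord (y + w) = -2 ord z` as soon as `y + w` has a pole
of order `≥ 2`; the fourth equation, and when `y` has a double pole also the first two, then force
`ord z = 1` and fix the leading coefficients. Finally, a meromorphic `f` with
`f' = λ (t - c)⁻² + O((t - c)⁻¹)` is `-λ / (t - c)` plus an analytic function, because
differentiation turns a pole of order `k ≥ 1` into one of order exactly `k + 1`.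
-/

open Filter Topology Polynomial

noncomputable section

/-- The Hamiltonian `H_{B₄⁽¹⁾}` evaluated along a solution `(x,y,z,w)`. -/
def HB4 (a1 a2 a3 a4 : ℂ) (x y z w : ℂ → ℂ) (t : ℂ) : ℂ :=
  x t ^ 2 * y t * (y t - 1) + x t * ((1 - 2*a2 - 2*a3 - 2*a4) * y t - a1) + t * y t
    + z t ^ 2 * w t * (w t - 1) + z t * ((1 - 2*a4) * w t - a3) + t * w t
    + 2 * y t * z t * (z t * w t + a3)
/-- `f` is meromorphic at `c`: after multiplication by some power of `(t - c)` it has a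
finite limit as `t → c`. -/
def MeroAt (f : ℂ → ℂ) (c : ℂ) : Prop :=
  ∃ (n : ℕ) (L : ℂ), Tendsto (fun t => (t - c) ^ n * f t) (𝓝[≠] c) (𝓝 L)

/-- `f t = L * (t - c) ^ n + o((t - c) ^ n)` as `t → c`, `t ≠ c`. For `L = 0` this only says that
`f` vanishes to order `> n`. -/
def HasLeadingTerm (f : ℂ → ℂ) (c : ℂ) (n : ℤ) (L : ℂ) : Prop :=
  Tendsto (fun t => (t - c) ^ (-n) * f t) (𝓝[≠] c) (𝓝 L)

namespace HasLeadingTerm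

variable {f g : ℂ → ℂ} {c L M : ℂ} {n m : ℤ}

theorem congr (h : HasLeadingTerm f c n L) (hfg : f =ᶠ[𝓝[≠] c] g) : HasLeadingTerm g c n L :=
  h.congr' (hfg.mono fun t ht => by rw [ht])

theorem of_order_eq (h : HasLeadingTerm f c n L) (hnm : n = m) : HasLeadingTerm f c m L :=
  hnm ▸ h

theorem unique (hL : HasLeadingTerm f c n L) (hM : HasLeadingTerm f c n M) : L = M :=
  tendsto_nhds_unique hL hM

theorem coeff_eq (hf : HasLeadingTerm f c n L) (hg : HasLeadingTerm g c n M)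
    (hfg : ∀ᶠ t in 𝓝[≠] c, f t = g t) : L = M :=
  (hf.congr hfg).unique hg

theorem const (a c : ℂ) : HasLeadingTerm (fun _ => a) c 0 a := by
  simp [HasLeadingTerm]

theorem id (c : ℂ) : HasLeadingTerm (fun t => t) c 0 c := by
  refine (tendsto_nhdsWithin_of_tendsto_nhds (continuous_id.tendsto c)).congr fun t => ?_
  simp

theorem of_eventuallyEq_zero (h : f =ᶠ[𝓝[≠] c] 0) (n : ℤ) : HasLeadingTerm f c n 0 :=
  tendsto_const_nhds.congr' (h.mono fun t ht => by simp [ht])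

theorem of_eventuallyEq_zpow_mul (hg : AnalyticAt ℂ g c)
    (hfg : f =ᶠ[𝓝[≠] c] fun t => (t - c) ^ n * g t) : HasLeadingTerm f c n (g c) := by
  refine (tendsto_nhdsWithin_of_tendsto_nhds hg.continuousAt.tendsto).congr' ?_
  filter_upwards [hfg, self_mem_nhdsWithin] with t ht htc
  rw [ht, ← mul_assoc, ← zpow_add₀ (sub_ne_zero.2 htc), neg_add_cancel, zpow_zero, one_mul]

theorem add (hf : HasLeadingTerm f c n L) (hg : HasLeadingTerm g c n M) :
    HasLeadingTerm (fun t => f t + g t) c n (L + M) :=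
  (Tendsto.add hf hg).congr fun _ => (mul_add _ _ _).symm

theorem sub (hf : HasLeadingTerm f c n L) (hg : HasLeadingTerm g c n M) :
    HasLeadingTerm (fun t => f t - g t) c n (L - M) :=
  (Tendsto.sub hf hg).congr fun _ => (mul_sub _ _ _).symm

theorem mul (hf : HasLeadingTerm f c n L) (hg : HasLeadingTerm g c m M) :
    HasLeadingTerm (fun t => f t * g t) c (n + m) (L * M) := by
  refine (Tendsto.mul hf hg).congr' ?_
  filter_upwards [self_mem_nhdsWithin] with t ht
  rw [neg_add, zpow_add₀ (sub_ne_zero.2 ht)]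
  ring

theorem const_mul (a : ℂ) (hf : HasLeadingTerm f c n L) :
    HasLeadingTerm (fun t => a * f t) c n (a * L) := by
  simpa using (const a c).mul hf

theorem zero_of_lt (hf : HasLeadingTerm f c n L) (hmn : m < n) : HasLeadingTerm f c m 0 := by
  have hpow : Tendsto (fun t => (t - c) ^ (n - m).toNat) (𝓝[≠] c) (𝓝 0) := by
    have : Tendsto (fun t => (t - c) ^ (n - m).toNat) (𝓝 c) (𝓝 ((c - c) ^ (n - m).toNat)) :=
      ((continuous_sub_right c).pow _).tendsto c
    rw [sub_self, zero_pow (by omega)] at this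
    exact tendsto_nhdsWithin_of_tendsto_nhds this
  refine (zero_mul L ▸ Tendsto.mul hpow hf).congr' ?_
  filter_upwards [self_mem_nhdsWithin] with t ht
  rw [← zpow_natCast, Int.toNat_of_nonneg (by omega), ← mul_assoc,
    ← zpow_add₀ (sub_ne_zero.2 ht)]
  ring_nf

theorem sub_of_lt (hf : HasLeadingTerm f c n L) (hg : HasLeadingTerm g c m M) (hnm : n < m) :
    HasLeadingTerm (fun t => f t - g t) c n L := by
  simpa using hf.sub (hg.zero_of_lt hnm)

theorem le_of_ne_zero (hf : HasLeadingTerm f c n L) (hf' : HasLeadingTerm f c m M) (hM : M ≠ 0) :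
    n ≤ m := by
  by_contra! hmn
  exact hM ((hf.zero_of_lt hmn).unique hf').symm

end HasLeadingTerm

section Meromorphic

variable {f g : ℂ → ℂ} {c L : ℂ} {n k : ℤ}

theorem MeromorphicAt.eventuallyEq_zero_or_exists_zpow_mul (hf : MeromorphicAt f c) :
    f =ᶠ[𝓝[≠] c] 0 ∨ ∃ (k : ℤ) (g : ℂ → ℂ), AnalyticAt ℂ g c ∧ g c ≠ 0 ∧
      f =ᶠ[𝓝[≠] c] fun t => (t - c) ^ k * g t := by
  cases h : meromorphicOrderAt f c with
  | top => exact Or.inl (meromorphicOrderAt_eq_top_iff.1 h)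
  | coe k => exact Or.inr ⟨k, (meromorphicOrderAt_eq_int_iff hf).1 h⟩

theorem MeromorphicAt.eventuallyEq_zero_or_exists_hasLeadingTerm (hf : MeromorphicAt f c) :
    f =ᶠ[𝓝[≠] c] 0 ∨ ∃ (k : ℤ) (L : ℂ), L ≠ 0 ∧ HasLeadingTerm f c k L := by
  obtain h0 | ⟨k, g, hg, hgc, hfg⟩ := hf.eventuallyEq_zero_or_exists_zpow_mul
  exacts [Or.inl h0, Or.inr ⟨k, g c, hgc, .of_eventuallyEq_zpow_mul hg hfg⟩]

theorem MeromorphicAt.exists_hasLeadingTerm_or_exists_lt (hf : MeromorphicAt f c) (n : ℤ) :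
    (∃ L, HasLeadingTerm f c n L) ∨ ∃ k < n, ∃ L ≠ 0, HasLeadingTerm f c k L := by
  obtain h0 | ⟨k, L, hL, hk⟩ := hf.eventuallyEq_zero_or_exists_hasLeadingTerm
  · exact Or.inl ⟨0, .of_eventuallyEq_zero h0 n⟩
  rcases lt_trichotomy k n with hkn | rfl | hnk
  exacts [Or.inr ⟨k, hkn, L, hL, hk⟩, Or.inl ⟨L, hk⟩, Or.inl ⟨0, hk.zero_of_lt hnk⟩]

theorem eventuallyEq_deriv_zpow_mul (hg : AnalyticAt ℂ g c)
    (hfg : f =ᶠ[𝓝[≠] c] fun t => (t - c) ^ k * g t) :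
    deriv f =ᶠ[𝓝[≠] c] fun t => (t - c) ^ (k - 1) * (k * g t + (t - c) * deriv g t) := by
  filter_upwards [hfg.nhdsNE_deriv, hg.eventually_analyticAt.filter_mono nhdsWithin_le_nhds,
    self_mem_nhdsWithin] with t hft hgt htc
  have htc : t - c ≠ 0 := sub_ne_zero.2 htc
  have hpow : HasDerivAt (fun s => (s - c) ^ k) (k * (t - c) ^ (k - 1)) t := by
    simpa [Function.comp_def] using
      (hasDerivAt_zpow k _ (Or.inl htc)).comp t ((hasDerivAt_id t).sub_const c)
  have hprod : HasDerivAt (fun s => (s - c) ^ k * g s)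
      (k * (t - c) ^ (k - 1) * g t + (t - c) ^ k * deriv g t) t :=
    hpow.mul hgt.differentiableAt.hasDerivAt
  rw [hft, hprod.deriv, zpow_sub_one₀ htc]
  field_simp

theorem HasLeadingTerm.deriv (hf : MeromorphicAt f c) (h : HasLeadingTerm f c n L) :
    HasLeadingTerm (deriv f) c (n - 1) (n * L) := by
  obtain h0 | ⟨k, g, hg, hgc, hfg⟩ := hf.eventuallyEq_zero_or_exists_zpow_mul
  · rw [h.unique (.of_eventuallyEq_zero h0 n), mul_zero]
    exact .of_eventuallyEq_zero (h0.nhdsNE_deriv.trans (by simp [Pi.zero_def])) _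
  have hk : HasLeadingTerm f c k (g c) := .of_eventuallyEq_zpow_mul hg hfg
  have hdk : HasLeadingTerm (_root_.deriv f) c (k - 1) (k * g c) := by
    simpa using HasLeadingTerm.of_eventuallyEq_zpow_mul (by fun_prop)
      (eventuallyEq_deriv_zpow_mul hg hfg)
  rcases lt_trichotomy n k with hnk | rfl | hkn
  · rw [h.unique (hk.zero_of_lt hnk), mul_zero]
    exact hdk.zero_of_lt (by omega)
  · rwa [h.unique hk]
  · exact absurd (h.le_of_ne_zero hk hgc) (not_le.2 hkn)

theorem HasLeadingTerm.id_mul_deriv (hf : MeromorphicAt f c) (h : HasLeadingTerm f c n L) :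
    HasLeadingTerm (fun t => t * _root_.deriv f t) c (n - 1) (c * (n * L)) :=
  ((HasLeadingTerm.id c).mul (h.deriv hf)).of_order_eq (zero_add _)

theorem HasLeadingTerm.lt_meromorphicOrderAt (hf : MeromorphicAt f c)
    (h : HasLeadingTerm f c n 0) : (n : WithTop ℤ) < meromorphicOrderAt f c := by
  cases hord : meromorphicOrderAt f c with
  | top => exact WithTop.coe_lt_top n
  | coe k =>
    obtain ⟨g, hg, hgc, hfg⟩ := (meromorphicOrderAt_eq_int_iff hf).1 hord
    have hk : HasLeadingTerm f c k (g c) := .of_eventuallyEq_zpow_mul hg hfg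
    refine WithTop.coe_lt_coe.2 (lt_of_le_of_ne (h.le_of_ne_zero hk hgc) ?_)
    rintro rfl
    exact hgc (hk.unique h)

theorem MeroAt.meromorphicAt (hf : MeroAt f c) (hd : ∀ᶠ t in 𝓝[≠] c, DifferentiableAt ℂ f t) :
    MeromorphicAt f c := by
  obtain ⟨n, L, hL⟩ := hf
  refine ⟨n + 1, Complex.analyticAt_of_differentiable_on_punctured_nhds_of_continuousAt ?_ ?_⟩
  · filter_upwards [hd] with t ht
    fun_prop
  · have hsub : Tendsto (fun t => t - c) (𝓝[≠] c) (𝓝 0) :=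
      tendsto_nhdsWithin_of_tendsto_nhds (by simpa using (continuous_sub_right c).tendsto c)
    rw [← continuousWithinAt_compl_self, ContinuousWithinAt]
    simpa [pow_succ', mul_assoc] using hsub.mul hL

theorem MeromorphicAt.exists_analyticAt_eq_div_add (hf : MeromorphicAt f c)
    (h : HasLeadingTerm (deriv f) c (-2) L) :
    ∃ g, AnalyticAt ℂ g c ∧ ∀ᶠ t in 𝓝[≠] c, f t = -L / (t - c) + g t := by
  set K := fun t => f t + L * (t - c)⁻¹
  have hK : MeromorphicAt K c := by fun_prop
  have hK' : HasLeadingTerm (deriv K) c (-2) 0 := by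
    have hpole : HasLeadingTerm (fun t => (t - c) ^ (-2 : ℤ) * L) c (-2) L :=
      .of_eventuallyEq_zpow_mul analyticAt_const EventuallyEq.rfl
    refine sub_self L ▸ (h.sub hpole).congr ?_
    filter_upwards [hf.eventually_analyticAt, self_mem_nhdsWithin] with t hft htc
    have htc : t - c ≠ 0 := sub_ne_zero.2 htc
    have hK : HasDerivAt K (deriv f t + L * (-1 / (t - c) ^ 2)) t :=
      hft.differentiableAt.hasDerivAt.add
        (HasDerivAt.const_mul L (HasDerivAt.fun_inv ((hasDerivAt_id t).sub_const c) htc))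
    rw [hK.deriv, zpow_neg, zpow_ofNat]
    ring
  have hord : 0 ≤ meromorphicOrderAt K c := by
    cases hk : meromorphicOrderAt K c with
    | top => exact le_top
    | coe k =>
      by_contra hneg
      have hk0 : k < 0 := by exact_mod_cast not_le.1 hneg
      have hlt := hK'.lt_meromorphicOrderAt hK.deriv
      rw [meromorphicOrderAt_deriv_eq_sub_one (by exact_mod_cast hk0.ne) hk] at hlt
      have : -2 < k - 1 := by exact_mod_cast hlt
      omega
  obtain ⟨g, hg, hKg⟩ := hK.meromorphicOrderAt_nonneg_iff.1 hord
  refine ⟨g, hg, hKg.mono fun t ht => ?_⟩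
  rw [← ht, neg_div, div_eq_mul_inv]
  ring

end Meromorphic

-- `eᵢ_balance` equates the lowest-order Laurent coefficients of the two sides of the `i`-th
-- equation.
namespace B4Eqs

variable {a0 a1 a2 a3 a4 c : ℂ} {x y z w : ℂ → ℂ}

theorem not_eventuallyEq_zero_z (hc : c ≠ 0)
    (hE : ∀ᶠ t in 𝓝[≠] c, B4Eqs a0 a1 a2 a3 a4 x y z w t) : ¬ z =ᶠ[𝓝[≠] c] 0 := by
  intro hz
  have hne : ∀ᶠ t in 𝓝[≠] c, t ≠ 0 := nhdsWithin_le_nhds (eventually_ne_nhds hc)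
  obtain ⟨t, hEt, hzt, hz't, ht⟩ := (hE.and (hz.and (hz.nhdsNE_deriv.and hne))).exists
  have h3 := hEt.2.2.1
  simp [hzt, hz't] at h3
  exact ht h3.symm

theorem e2_balance (hE : ∀ᶠ t in 𝓝[≠] c, B4Eqs a0 a1 a2 a3 a4 x y z w t)
    (mx : MeromorphicAt x c) (my : MeromorphicAt y c) {ky : ℤ} {B : ℂ}
    (hy : HasLeadingTerm y c ky B) (hB : B ≠ 0) (hky : ky ≤ -2) :
    ∃ a, HasLeadingTerm x c (-ky - 1) a ∧ c * ky = -2 * a * B := by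
  have hE2 : ∀ᶠ t in 𝓝[≠] c, t * deriv y t = -2 * (x t * (y t * y t)) + 2 * (x t * y t)
      - (1 - 2 * a2 - 2 * a3 - 2 * a4) * y t + a1 :=
    hE.mono fun t h => by linear_combination h.2.1
  have hL := hy.id_mul_deriv my
  obtain ⟨a, hx⟩ | ⟨px, hpx, a, ha, hx⟩ := mx.exists_hasLeadingTerm_or_exists_lt (-ky - 1)
  · refine ⟨a, hx, mul_right_cancel₀ hB ?_⟩
    have := hL.coeff_eq
      (((((hx.mul (hy.mul hy)).const_mul (-2)).of_order_eq (by omega)).add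
        (((hx.mul hy).const_mul 2).zero_of_lt (by omega))).sub
        ((hy.const_mul _).zero_of_lt (by omega)) |>.add
        ((HasLeadingTerm.const a1 c).zero_of_lt (by omega))) hE2
    linear_combination this
  · exfalso
    have := (hL.zero_of_lt (by omega)).coeff_eq
      ((((hx.mul (hy.mul hy)).const_mul (-2)).add
        (((hx.mul hy).const_mul 2).zero_of_lt (by omega))).sub
        ((hy.const_mul _).zero_of_lt (by omega)) |>.add
        ((HasLeadingTerm.const a1 c).zero_of_lt (by omega))) hE2
    have : a * (B * B) = 0 := by linear_combination this / 2
    simp [ha, hB] at this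

theorem e3_balance (hc : c ≠ 0) (hE : ∀ᶠ t in 𝓝[≠] c, B4Eqs a0 a1 a2 a3 a4 x y z w t)
    (mz : MeromorphicAt z c) {e kv : ℤ} {γ V : ℂ} (hz : HasLeadingTerm z c e γ) (hγ : γ ≠ 0)
    (hv : HasLeadingTerm (fun t => y t + w t) c kv V) (hV : V ≠ 0) (hkv : kv ≤ -2) :
    kv = -2 * e ∧ (e = 1 ∧ c * γ - c = 2 * γ ^ 2 * V ∨ 2 ≤ e ∧ -c = 2 * γ ^ 2 * V) := by
  have hE3 : ∀ᶠ t in 𝓝[≠] c, t * deriv z t - (1 - 2 * a4) * z t - t =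
      z t * z t * (2 * (y t + w t) - 1) :=
    hE.mono fun t h => by linear_combination h.2.2.1
  have hR := (hz.mul hz).mul ((hv.const_mul 2).sub_of_lt (.const 1 c) (by omega : kv < 0))
  have hL := hz.id_mul_deriv mz
  have hdz := hz.const_mul (1 - 2 * a4)
  rcases lt_trichotomy (e + e + kv) 0 with hneg | hzero | hpos
  · have := (((hL.zero_of_lt (by omega)).sub (hdz.zero_of_lt (by omega))).sub
      ((HasLeadingTerm.id c).zero_of_lt hneg)).coeff_eq hR hE3
    have : γ * γ * V = 0 := by linear_combination -this / 2
    simp [hγ, hV] at this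
  · refine ⟨by omega, ?_⟩
    have hR0 := hR.of_order_eq hzero
    rcases (by omega : e = 1 ∨ 2 ≤ e) with rfl | he
    · have := (((hL.of_order_eq (by norm_num)).sub (hdz.zero_of_lt (by norm_num))).sub
        (.id c)).coeff_eq hR0 hE3
      push_cast at this
      exact Or.inl ⟨rfl, by linear_combination this⟩
    · have := (((hL.zero_of_lt (by omega)).sub (hdz.zero_of_lt (by omega))).sub
        (.id c)).coeff_eq hR0 hE3
      exact Or.inr ⟨he, by linear_combination this⟩
  · have := (((hL.zero_of_lt (by omega)).sub (hdz.zero_of_lt (by omega))).sub (.id c)).coeff_eq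
      (hR.zero_of_lt hpos) hE3
    exact absurd (by linear_combination -this) hc

theorem e4_balance (hE : ∀ᶠ t in 𝓝[≠] c, B4Eqs a0 a1 a2 a3 a4 x y z w t)
    (mw : MeromorphicAt w c) {e : ℤ} {γ V Y : ℂ} (hz : HasLeadingTerm z c e γ) (he : 1 ≤ e)
    (hv : HasLeadingTerm (fun t => y t + w t) c (-2 * e) V)
    (hy : HasLeadingTerm y c (-2 * e) Y) :
    e = 1 ∧ c * (V - Y) = γ * (V - Y) * (V + Y) ∨ 2 ≤ e ∧ γ * (V - Y) * (V + Y) = 0 := by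
  have hw : HasLeadingTerm w c (-2 * e) (V - Y) :=
    (hv.sub hy).congr (.of_forall fun t => add_sub_cancel_left (y t) (w t))
  have hE4 : ∀ᶠ t in 𝓝[≠] c, t * deriv w t = -2 * (z t * (w t * w t)) + 2 * (z t * w t)
      - (1 - 2 * a4) * w t - 2 * a3 * y t - 4 * (y t * (z t * w t)) + a3 :=
    hE.mono fun t h => by linear_combination h.2.2.2
  have hR := (((((((hz.mul (hw.mul hw)).const_mul (-2)).of_order_eq (m := -3 * e) (by omega)).add
      (((hz.mul hw).const_mul 2).zero_of_lt (by omega))).sub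
      ((hw.const_mul (1 - 2 * a4)).zero_of_lt (by omega))).sub
      ((hy.const_mul (2 * a3)).zero_of_lt (by omega))).sub
      (((hy.mul (hz.mul hw)).const_mul 4).of_order_eq (by omega))).add
      ((HasLeadingTerm.const a3 c).zero_of_lt (by omega))
  have hL := hw.id_mul_deriv mw
  rcases (by omega : e = 1 ∨ 2 ≤ e) with rfl | he2
  · have := (hL.of_order_eq (by norm_num)).coeff_eq hR hE4
    push_cast at this
    exact Or.inl ⟨rfl, by linear_combination (-1 / 2) * this⟩
  · have := (hL.zero_of_lt (by omega)).coeff_eq hR hE4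
    exact Or.inr ⟨he2, by linear_combination (1 / 2) * this⟩

theorem e1_rhs_eq (hE : ∀ᶠ t in 𝓝[≠] c, B4Eqs a0 a1 a2 a3 a4 x y z w t) :
    ∀ᶠ t in 𝓝[≠] c, t * deriv x t = 2 * (x t * x t * y t) - x t * x t
      + (1 - 2 * a2 - 2 * a3 - 2 * a4) * x t + 2 * a3 * z t + 2 * (z t * z t * w t) + t :=
  hE.mono fun t h => by linear_combination h.1

theorem e1_false_of_lt (hE : ∀ᶠ t in 𝓝[≠] c, B4Eqs a0 a1 a2 a3 a4 x y z w t)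
    (mx : MeromorphicAt x c) {e ky : ℤ} {γ V B a : ℂ} (hz : HasLeadingTerm z c e γ) (hγ : γ ≠ 0)
    (he : 1 ≤ e) (hv : HasLeadingTerm (fun t => y t + w t) c (-2 * e) V)
    (hy : HasLeadingTerm y c ky B) (hB : B ≠ 0) (hky : ky < -2 * e)
    (hx : HasLeadingTerm x c (-ky - 1) a) : False := by
  have hw : HasLeadingTerm w c ky (0 - B) :=
    ((hv.zero_of_lt hky).sub hy).congr (.of_forall fun t => add_sub_cancel_left (y t) (w t))
  have := ((hx.id_mul_deriv mx).zero_of_lt (by omega)).coeff_eq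
    ((((((((hx.mul hx).mul hy).const_mul 2).zero_of_lt (by omega)).sub
      ((hx.mul hx).zero_of_lt (by omega))).add
      ((hx.const_mul _).zero_of_lt (by omega))).add
      ((hz.const_mul (2 * a3)).zero_of_lt (by omega))).add
      (((hz.mul hz).mul hw).const_mul 2) |>.add
      ((HasLeadingTerm.id c).zero_of_lt (by omega))) (e1_rhs_eq hE)
  have : γ * γ * B = 0 := by linear_combination this / 2
  simp [hγ, hB] at this

theorem e1_balance (hE : ∀ᶠ t in 𝓝[≠] c, B4Eqs a0 a1 a2 a3 a4 x y z w t)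
    (mx : MeromorphicAt x c) {e : ℤ} {γ V B a : ℂ} (hz : HasLeadingTerm z c e γ) (he : 1 ≤ e)
    (hv : HasLeadingTerm (fun t => y t + w t) c (-2 * e) V)
    (hy : HasLeadingTerm y c (-2 * e) B) (hx : HasLeadingTerm x c (2 * e - 1) a) :
    e = 1 ∧ c * a = 2 * a ^ 2 * B + 2 * γ ^ 2 * (V - B) + c ∨
      2 ≤ e ∧ 2 * γ ^ 2 * (V - B) + c = 0 := by
  have hw : HasLeadingTerm w c (-2 * e) (V - B) :=
    (hv.sub hy).congr (.of_forall fun t => add_sub_cancel_left (y t) (w t))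
  have hzzw := (((hz.mul hz).mul hw).const_mul 2).of_order_eq (m := 0) (by omega)
  have hxxy := ((hx.mul hx).mul hy).const_mul 2
  have hL := hx.id_mul_deriv mx
  rcases (by omega : e = 1 ∨ 2 ≤ e) with rfl | he2
  · have := (hL.of_order_eq (by norm_num)).coeff_eq
      ((((((hxxy.of_order_eq (by norm_num)).sub ((hx.mul hx).zero_of_lt (by norm_num))).add
        ((hx.const_mul _).zero_of_lt (by norm_num))).add
        ((hz.const_mul (2 * a3)).zero_of_lt (by norm_num))).add hzzw).add (.id c)) (e1_rhs_eq hE)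
    push_cast at this
    exact Or.inl ⟨rfl, by linear_combination this⟩
  · have := (hL.zero_of_lt (by omega)).coeff_eq
      ((((((hxxy.zero_of_lt (by omega)).sub ((hx.mul hx).zero_of_lt (by omega))).add
        ((hx.const_mul _).zero_of_lt (by omega))).add
        ((hz.const_mul (2 * a3)).zero_of_lt (by omega))).add hzzw).add (.id c)) (e1_rhs_eq hE)
    exact Or.inr ⟨he2, by linear_combination -this⟩

theorem coeff_cases_of_double_pole_y {γ V B a : ℂ} (hc : c ≠ 0) (hV : V ≠ 0)
    (h3 : c * γ - c = 2 * γ ^ 2 * V) (h2 : c = a * B)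
    (h1 : c * a = 2 * a ^ 2 * B + 2 * γ ^ 2 * (V - B) + c)
    (h4 : c * (V - B) = γ * (V - B) * (V + B)) : V = -c ∨ V = -3 * c := by
  have h5 : 2 * γ ^ 2 * (V - B) = -c * a - c := by linear_combination -h1 + 2 * a * h2
  have h6 : (V - B) * (c - γ * (V + B)) = 0 := by linear_combination h4
  rcases mul_eq_zero.1 h6 with hVB | hcγ
  · have ha : c * (a + 1) = 0 := by linear_combination h5 - 2 * γ ^ 2 * hVB
    have ha : a = -1 := by linear_combination (mul_eq_zero.1 ha).resolve_left hc
    left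
    linear_combination hVB + h2 + B * ha
  · have ha : c * (a - 1) = 0 := by linear_combination 2 * h3 + h5 - 2 * γ * hcγ
    have ha : a = 1 := by linear_combination (mul_eq_zero.1 ha).resolve_left hc
    have hγ : c * ((γ - 1) * (2 * γ + 1)) = 0 := by
      linear_combination 2 * γ ^ 2 * (h2 + B * ha) - h3 - h5 + c * ha
    rcases mul_eq_zero.1 ((mul_eq_zero.1 hγ).resolve_left hc) with hγ | hγ
    · exact absurd (by linear_combination -h3 / 2 + (c - 2 * γ * V - 2 * V) * hγ / 2) hV
    · right
      linear_combination -2 * h3 + (c + V - 2 * γ * V) * hγ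

theorem y_add_w_pole_cases (hc : c ≠ 0) (hE : ∀ᶠ t in 𝓝[≠] c, B4Eqs a0 a1 a2 a3 a4 x y z w t)
    (mx : MeromorphicAt x c) (my : MeromorphicAt y c) (mz : MeromorphicAt z c)
    (mw : MeromorphicAt w c) {kv : ℤ} {V : ℂ}
    (hv : HasLeadingTerm (fun t => y t + w t) c kv V) (hV : V ≠ 0) (hkv : kv ≤ -2) :
    kv = -2 ∧ (V = -c ∨ V = -3 * c) := by
  obtain hz0 | ⟨e, γ, hγ, hz⟩ := mz.eventuallyEq_zero_or_exists_hasLeadingTerm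
  · exact absurd hz0 (not_eventuallyEq_zero_z hc hE)
  obtain ⟨rfl, h3⟩ := e3_balance hc hE mz hz hγ hv hV hkv
  have he : 1 ≤ e := by omega
  obtain ⟨Y, hy⟩ | ⟨ky, hky, B, hB, hy⟩ := my.exists_hasLeadingTerm_or_exists_lt (-2 * e + 1)
  · rcases e4_balance hE mw hz he hv (hy.zero_of_lt (by omega)) with ⟨rfl, h4⟩ | ⟨-, h4⟩
    · have h3 := (h3.resolve_right fun h => absurd h.1 (by norm_num)).2
      have hγV : γ * V = c := mul_right_cancel₀ hV (by linear_combination -h4)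
      have hγ1 : c * (γ + 1) = 0 := by linear_combination -h3 - 2 * γ * hγV
      have hγ1 : γ = -1 := by linear_combination (mul_eq_zero.1 hγ1).resolve_left hc
      exact ⟨rfl, Or.inl (by linear_combination V * hγ1 - hγV)⟩
    · simp [hγ, hV] at h4
  · obtain ⟨a, hx, hxa⟩ := e2_balance hE mx my hy hB (by omega)
    rcases (by omega : ky < -2 * e ∨ ky = -2 * e) with hlt | rfl
    · exact (e1_false_of_lt hE mx hz hγ he hv hy hB hlt hx).elim
    rcases e1_balance hE mx hz he hv hy (hx.of_order_eq (by omega)) with ⟨rfl, h1⟩ | ⟨he2, h1⟩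
    · have h3 := (h3.resolve_right fun h => absurd h.1 (by norm_num)).2
      have h4 := ((e4_balance hE mw hz le_rfl hv hy).resolve_right
        fun h => absurd h.1 (by norm_num)).2
      refine ⟨rfl, coeff_cases_of_double_pole_y hc hV h3 ?_ h1 h4⟩
      push_cast at hxa
      linear_combination -hxa / 2
    · have h3 := (h3.resolve_left fun h => by omega).2
      have : γ * γ * B = 0 := by linear_combination -(h1 + h3) / 2
      simp [hγ, hB] at this

theorem exists_hasLeadingTerm_y_add_w (hc : c ≠ 0)
    (hE : ∀ᶠ t in 𝓝[≠] c, B4Eqs a0 a1 a2 a3 a4 x y z w t)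
    (mx : MeromorphicAt x c) (my : MeromorphicAt y c) (mz : MeromorphicAt z c)
    (mw : MeromorphicAt w c) :
    ∃ lam, (lam = 0 ∨ lam = -c ∨ lam = -3 * c) ∧
      HasLeadingTerm (fun t => y t + w t) c (-2) lam := by
  have mv : MeromorphicAt (fun t => y t + w t) c := by fun_prop
  obtain ⟨L, hv⟩ | ⟨kv, hkv, V, hV, hv⟩ := mv.exists_hasLeadingTerm_or_exists_lt (-1)
  · exact ⟨0, Or.inl rfl, hv.zero_of_lt (by norm_num)⟩
  obtain ⟨rfl, hV'⟩ := y_add_w_pole_cases hc hE mx my mz mw hv hV (by omega)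
  exact ⟨V, Or.inr hV', hv⟩

end B4Eqs

theorem hasDerivAt_HB4 {a0 a1 a2 a3 a4 t : ℂ} {x y z w : ℂ → ℂ} (ht : t ≠ 0)
    (hx : DifferentiableAt ℂ x t) (hy : DifferentiableAt ℂ y t) (hz : DifferentiableAt ℂ z t)
    (hw : DifferentiableAt ℂ w t) (hE : B4Eqs a0 a1 a2 a3 a4 x y z w t) :
    HasDerivAt (HB4 a1 a2 a3 a4 x y z w) (y t + w t) t := by
  obtain ⟨h1, h2, h3, h4⟩ := hE
  have hX := hx.hasDerivAt
  have hY := hy.hasDerivAt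
  have hZ := hz.hasDerivAt
  have hW := hw.hasDerivAt
  have hT := hasDerivAt_id' (x := t)
  refine (((((((((hX.pow 2).mul hY).mul (hY.sub_const 1)).add
    (hX.mul ((hY.const_mul (1 - 2 * a2 - 2 * a3 - 2 * a4)).sub_const a1))).add (hT.mul hY)).add
    (((hZ.pow 2).mul hW).mul (hW.sub_const 1))).add
    (hZ.mul ((hW.const_mul (1 - 2 * a4)).sub_const a3))).add (hT.mul hW)).add
    (((hY.const_mul 2).mul hZ).mul ((hZ.mul hW).add_const a3))).congr_deriv ?_
  refine mul_left_cancel₀ ht ?_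
  simp only [Pi.pow_apply, Pi.mul_apply]
  -- The system reads `t x' = ∂H/∂y`, `t y' = -∂H/∂x`, `t z' = ∂H/∂w`, `t w' = -∂H/∂z`; the
  -- coefficients are `∂H/∂x`, `∂H/∂y`, `∂H/∂z`, `∂H/∂w`.
  linear_combination
    (2 * x t * y t * (y t - 1) + (1 - 2 * a2 - 2 * a3 - 2 * a4) * y t - a1) * h1
    + (x t ^ 2 * (2 * y t - 1) + (1 - 2 * a2 - 2 * a3 - 2 * a4) * x t + t
      + 2 * z t * (z t * w t + a3)) * h2
    + (2 * z t * w t * (w t - 1) + (1 - 2 * a4) * w t - a3 + 2 * y t * (2 * z t * w t + a3)) * h3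
    + (z t ^ 2 * (2 * w t - 1) + (1 - 2 * a4) * z t + t + 2 * y t * z t ^ 2) * h4

theorem B4_hamiltonian_residue_at_nonzero_point_general (a0 a1 a2 a3 a4 : ℂ)
    (c : ℂ) (hc : c ≠ 0)
    (ε : ℝ) (hε : 0 < ε) (x y z w : ℂ → ℂ)
    (hsol : SolvesB4On a0 a1 a2 a3 a4 x y z w {t : ℂ | t ≠ c ∧ ‖t - c‖ < ε})
    (hx : MeroAt x c) (hy : MeroAt y c) (hz : MeroAt z c) (hw : MeroAt w c) :
    ∃ (r : ℂ) (g : ℂ → ℂ), (r = 0 ∨ r = c ∨ r = 3*c) ∧ AnalyticAt ℂ g c ∧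
      ∀ᶠ t in 𝓝[≠] c, HB4 a1 a2 a3 a4 x y z w t = r / (t - c) + g t := by
  have hsol : ∀ᶠ t in 𝓝[≠] c, _ := mem_of_superset
    (inter_mem_nhdsWithin {c}ᶜ (Metric.ball_mem_nhds c hε))
    fun t ht => hsol t ⟨ht.1, by simpa [dist_eq_norm] using ht.2⟩
  have mx := hx.meromorphicAt (hsol.mono fun _ h => h.1)
  have my := hy.meromorphicAt (hsol.mono fun _ h => h.2.1)
  have mz := hz.meromorphicAt (hsol.mono fun _ h => h.2.2.1)
  have mw := hw.meromorphicAt (hsol.mono fun _ h => h.2.2.2.1)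
  obtain ⟨lam, hlam, hv⟩ :=
    B4Eqs.exists_hasLeadingTerm_y_add_w hc (hsol.mono fun _ h => h.2.2.2.2) mx my mz mw
  have hH' : HasLeadingTerm (deriv (HB4 a1 a2 a3 a4 x y z w)) c (-2) lam := by
    refine hv.congr ?_
    filter_upwards [hsol, nhdsWithin_le_nhds (eventually_ne_nhds hc)] with t ⟨h1, h2, h3, h4, hE⟩ ht
    exact (hasDerivAt_HB4 ht h1 h2 h3 h4 hE).deriv.symm
  obtain ⟨g, hg, hHg⟩ := (show MeromorphicAt (HB4 a1 a2 a3 a4 x y z w) c by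
    unfold HB4; fun_prop).exists_analyticAt_eq_div_add hH'
  refine ⟨-lam, g, ?_, hg, hHg⟩
  rcases hlam with rfl | rfl | rfl <;> simp

/-- Along a solution of the Sasano system `B₄⁽¹⁾` meromorphic at `c ≠ 0`, the Hamiltonian
has a pole of order at most one at `c`, with residue `0`, `c` or `3c`. -/
theorem B4_hamiltonian_residue_at_nonzero_point (a0 a1 a2 a3 a4 : ℂ)
    (hsum : a0 + a1 + 2*a2 + 2*a3 + 2*a4 = 1) (c : ℂ) (hc : c ≠ 0)
    (ε : ℝ) (hε : 0 < ε) (x y z w : ℂ → ℂ)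
    (hsol : SolvesB4On a0 a1 a2 a3 a4 x y z w {t : ℂ | t ≠ c ∧ ‖t - c‖ < ε})
    (hx : MeroAt x c) (hy : MeroAt y c) (hz : MeroAt z c) (hw : MeroAt w c) :
    ∃ (r : ℂ) (g : ℂ → ℂ), (r = 0 ∨ r = c ∨ r = 3*c) ∧ AnalyticAt ℂ g c ∧
      ∀ᶠ t in 𝓝[≠] c, HB4 a1 a2 a3 a4 x y z w t = r / (t - c) + g t :=
  B4_hamiltonian_residue_at_nonzero_point_general a0 a1 a2 a3 a4 c hc ε hε x y z w hsol hx hy hz hw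
end
end

section
/- Let α0,α1,α2,α3,α4 be complex numbers with α0+α1+2α2+2α3+2α4=1, let Ω ⊆ ℂ∖{0} be a nonempty connected open set, and let (x,y,z,w) be holomorphic functions on Ω satisfying the Sasano system B4(α0,α1,α2,α3,α4) on Ω. Then: (0) if y ≡ 1 on Ω then α0 = 0; (1) if y ≡ 0 on Ω then α1 = 0; (2) if x ≡ z on Ω then α2 = 0; (3) if w ≡ 0 on Ω then α3 = 0 or y ≡ 1/2 on Ω; (4) z ≡ 0 on Ω is impossible. -/
/-!
If a component is constant on the open set `Ω` (or `x = z` there), its derivative vanishes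
(or `x' = z'`) on `Ω`, and the corresponding equation of `B₄` collapses to a polynomial identity:
`y ≡ 1` gives `α₀ = 0` via the normalisation, `y ≡ 0` gives `α₁ = 0`, `w ≡ 0` gives
`α₃ (1 - 2y) = 0`, and `z ≡ 0` gives `t = 0`, impossible on `Ω`. Subtracting the `z`-equation
from the `x`-equation along `x = z` leaves `α₂ z = 0`, so `α₂ = 0` since `z ≢ 0`.
-/

open Filter Topology Polynomial

noncomputable section

theorem deriv_eq_zero_of_eqOn_const {𝕜 F : Type*} [NontriviallyNormedField 𝕜]
    [NormedAddCommGroup F] [NormedSpace 𝕜 F] {f : 𝕜 → F} {c : F} {s : Set 𝕜} {t : 𝕜}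
    (h : s.EqOn f fun _ => c) (hs : IsOpen s) (ht : t ∈ s) : deriv f t = 0 :=
  (h.deriv hs ht).trans (deriv_const t c)

namespace B4Eqs

variable {a0 a1 a2 a3 a4 : ℂ} {x y z w : ℂ → ℂ} {t : ℂ}

theorem a0_eq_zero (hsum : a0 + a1 + 2*a2 + 2*a3 + 2*a4 = 1)
    (h : B4Eqs a0 a1 a2 a3 a4 x y z w t) (hy : y t = 1) (hy' : deriv y t = 0) : a0 = 0 := by
  have e := h.2.1
  rw [hy, hy'] at e
  linear_combination hsum + e

theorem a1_eq_zero (h : B4Eqs a0 a1 a2 a3 a4 x y z w t) (hy : y t = 0)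
    (hy' : deriv y t = 0) : a1 = 0 := by
  have e := h.2.1
  rw [hy, hy'] at e
  linear_combination -e

theorem a2_mul_eq_zero (h : B4Eqs a0 a1 a2 a3 a4 x y z w t) (hxz : x t = z t)
    (hxz' : deriv x t = deriv z t) : a2 * z t = 0 := by
  obtain ⟨ex, -, ez, -⟩ := h
  rw [hxz, hxz'] at ex
  linear_combination (ex - ez) / 2

theorem a3_mul_eq_zero (h : B4Eqs a0 a1 a2 a3 a4 x y z w t) (hw : w t = 0)
    (hw' : deriv w t = 0) : a3 * (1 - 2 * y t) = 0 := by
  have e := h.2.2.2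
  rw [hw, hw'] at e
  linear_combination -e

theorem eq_zero_of_z_eq_zero (h : B4Eqs a0 a1 a2 a3 a4 x y z w t) (hz : z t = 0)
    (hz' : deriv z t = 0) : t = 0 := by
  have e := h.2.2.1
  rw [hz, hz'] at e
  linear_combination -e

end B4Eqs

/-- Basic rigidity properties of holomorphic solutions of the Sasano system `B₄⁽¹⁾` on a
nonempty connected open set `Ω ⊆ ℂ ∖ {0}`. -/
theorem B4_constant_component_constraints (a0 a1 a2 a3 a4 : ℂ)
    (hsum : a0 + a1 + 2*a2 + 2*a3 + 2*a4 = 1) (Ω : Set ℂ)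
    (hopen : IsOpen Ω) (hconn : IsConnected Ω) (h0 : (0 : ℂ) ∉ Ω)
    (x y z w : ℂ → ℂ) (hsol : SolvesB4On a0 a1 a2 a3 a4 x y z w Ω) :
    ((∀ t ∈ Ω, y t = 1) → a0 = 0) ∧
    ((∀ t ∈ Ω, y t = 0) → a1 = 0) ∧
    ((∀ t ∈ Ω, x t = z t) → a2 = 0) ∧
    ((∀ t ∈ Ω, w t = 0) → (a3 = 0 ∨ ∀ t ∈ Ω, y t = 1/2)) ∧
    ¬ (∀ t ∈ Ω, z t = 0) := by
  have eqs : ∀ t ∈ Ω, B4Eqs a0 a1 a2 a3 a4 x y z w t := fun t ht => (hsol t ht).2.2.2.2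
  obtain ⟨t0, ht0⟩ := hconn.nonempty
  have hz : ¬ ∀ t ∈ Ω, z t = 0 := fun hz => h0 <| (eqs t0 ht0).eq_zero_of_z_eq_zero
    (hz t0 ht0) (deriv_eq_zero_of_eqOn_const hz hopen ht0) ▸ ht0
  refine ⟨fun hy => ?_, fun hy => ?_, fun hxz => ?_, fun hw => ?_, hz⟩
  · exact (eqs t0 ht0).a0_eq_zero hsum (hy t0 ht0) (deriv_eq_zero_of_eqOn_const hy hopen ht0)
  · exact (eqs t0 ht0).a1_eq_zero (hy t0 ht0) (deriv_eq_zero_of_eqOn_const hy hopen ht0)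
  · by_contra ha2
    exact hz fun t ht => (mul_eq_zero.mp <| (eqs t ht).a2_mul_eq_zero (hxz t ht)
      (Set.EqOn.deriv hxz hopen ht)).resolve_left ha2
  · refine or_iff_not_imp_left.mpr fun ha3 t ht => ?_
    have h := (mul_eq_zero.mp <| (eqs t ht).a3_mul_eq_zero (hw t ht)
      (deriv_eq_zero_of_eqOn_const hw hopen ht)).resolve_left ha3
    linear_combination -h / 2
end
end
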